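/- arXiv:1504.06766 — 2 statements merged into one kernel-verified Lean document; each statement's English description precedes it below -/
import Mathlib

section
/- Let cost : ℕ → ℤ^r and b ∈ ℕ^r, and suppose all prefix sums Σ_{j=0}^{i} cost(j) are ≤ b component-wise. If there exist indices j < k such that Σ_{l=j}^{k−1} cost(l) ≤ 0 component-wise (the loop consumes no net resources), then the infinite sequence obtained by repeating the segment [j,k) forever after position j (i.e., cost'(i) = cost(j + ((i−j) mod (k−j))) for i ≥ j, cost'(i) = cost(i) for i < j) also has all prefix sums ≤ b. -/
/-!
Past position `j` the loop-extended sequence runs through `q` full copies of the loop followed by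
an initial piece of it. Each full copy has net cost `≤ 0`, so dropping them only increases the
partial sum, and what remains is a prefix sum of the original sequence, which is bounded by `b`.
-/

open Finset

section LoopExtension

variable {M : Type*} [AddCommMonoid M]

def loopExtend (f : ℕ → M) (j k : ℕ) (m : ℕ) : M :=
  if m < j then f m else f (j + (m - j) % (k - j))

theorem sum_range_mul_add_mod (h : ℕ → M) {d s : ℕ} (hs : s ≤ d) (q : ℕ) :
    ∑ n ∈ range (q * d + s), h (n % d) = q • ∑ n ∈ range d, h n + ∑ n ∈ range s, h n := by
  induction q with
  | zero =>
    rw [zero_mul, zero_add, zero_smul, zero_add]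
    refine sum_congr rfl fun n hn => ?_
    rw [Nat.mod_eq_of_lt (lt_of_lt_of_le (mem_range.mp hn) hs)]
  | succ q ih =>
    have hd : (q + 1) * d + s = d + (q * d + s) := by ring
    simp only [hd, sum_range_add, Nat.add_mod_left, ih, succ_nsmul']
    rw [← add_assoc]
    congr 2
    exact sum_congr rfl fun n hn => by rw [Nat.mod_eq_of_lt (mem_range.mp hn)]

theorem sum_range_loopExtend_of_le {f : ℕ → M} {j i : ℕ} (k : ℕ) (hi : i ≤ j) :
    ∑ m ∈ range i, loopExtend f j k m = ∑ m ∈ range i, f m :=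
  sum_congr rfl fun _ hm => if_pos (lt_of_lt_of_le (mem_range.mp hm) hi)

theorem sum_range_loopExtend (f : ℕ → M) {j k : ℕ} (hjk : j < k) (t : ℕ) :
    ∑ m ∈ range (j + t + 1), loopExtend f j k m =
      (t / (k - j)) • ∑ l ∈ Ico j k, f l + ∑ m ∈ range (j + t % (k - j) + 1), f m := by
  have hd : 0 < k - j := Nat.sub_pos_of_lt hjk
  have hloop_eq : ∀ n, loopExtend f j k (j + n) = f (j + n % (k - j)) := fun n => by
    simp [loopExtend]
  have ht : t + 1 = t / (k - j) * (k - j) + (t % (k - j) + 1) := by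
    rw [← add_assoc, Nat.div_add_mod']
  rw [add_assoc, sum_range_add, sum_range_loopExtend_of_le k le_rfl, add_assoc j,
    sum_range_add f j, sum_Ico_eq_sum_range]
  simp only [hloop_eq]
  rw [ht, sum_range_mul_add_mod (fun n => f (j + n)) (Nat.mod_lt t hd), add_left_comm]

theorem sum_range_loopExtend_le [PartialOrder M] [IsOrderedAddMonoid M] (f : ℕ → M) {j k : ℕ}
    (hjk : j < k) (hloop : ∑ l ∈ Ico j k, f l ≤ 0) (t : ℕ) :
    ∑ m ∈ range (j + t + 1), loopExtend f j k m ≤ ∑ m ∈ range (j + t % (k - j) + 1), f m := by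
  rw [sum_range_loopExtend f hjk]
  exact add_le_of_nonpos_left (nsmul_nonpos hloop _)

end LoopExtension

theorem loop_repetition (r : ℕ) (cost : ℕ → (Fin r → ℤ)) (b : Fin r → ℕ)
    (hpref : ∀ i : ℕ, (∑ j ∈ Finset.range (i + 1), cost j) ≤ fun m => (b m : ℤ))
    (j k : ℕ) (hjk : j < k)
    (hloop : (∑ l ∈ Finset.Ico j k, cost l) ≤ 0) :
    ∀ i : ℕ,
      (∑ i' ∈ Finset.range (i + 1),
          (fun m => if m < j then cost m else cost (j + ((m - j) % (k - j)))) i')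
        ≤ fun m => (b m : ℤ) := by
  intro i
  change ∑ m ∈ range (i + 1), loopExtend cost j k m ≤ _
  rcases le_or_gt (i + 1) j with hi | hi
  · rw [sum_range_loopExtend_of_le k hi]
    exact hpref i
  · obtain ⟨t, rfl⟩ := Nat.exists_eq_add_of_le (Nat.le_of_lt_succ hi)
    exact (sum_range_loopExtend_le cost hjk hloop t).trans (hpref _)
end

section
/- Let cost : ℕ → ℤ^r, b ∈ ℕ^r, with all prefix sums ≤ b, and suppose there exist j < k with L = Σ_{l=j}^{k−1} cost(l) satisfying L ≤ 0 component-wise and L_m < 0 for some component m (the loop strictly produces resource m without consuming others on net). Then for every target value f ∈ ℕ there exists h ∈ ℕ such that after inserting h repetitions of the segment [j,k) at position k, the prefix sum up to position k + h(k−j) has its m-th component ≤ b_m − f, i.e., at least f units of resource m are available at that point, and all prefix sums still remain ≤ b. -/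
theorem productive_loop_pumping (r : ℕ) (cost : ℕ → (Fin r → ℤ)) (b : Fin r → ℕ)
    (hpref : ∀ i : ℕ, (∑ j ∈ Finset.range (i + 1), cost j) ≤ fun m => (b m : ℤ))
    (j k : ℕ) (hjk : j < k) (m : Fin r)
    (hloop : (∑ l ∈ Finset.Ico j k, cost l) ≤ 0)
    (hprod : (∑ l ∈ Finset.Ico j k, cost l) m < 0) :
    ∀ f : ℕ, ∃ h : ℕ,
      let cost' : ℕ → (Fin r → ℤ) := fun i =>
        if i < k then cost i
        else if i < k + h * (k - j) then cost (j + ((i - k) % (k - j)))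
        else cost (i - h * (k - j))
      ((∑ l ∈ Finset.range (k + h * (k - j)), cost' l) m ≤ (b m : ℤ) - (f : ℤ)) ∧
      ∀ i : ℕ, (∑ l ∈ Finset.range (i + 1), cost' l) ≤ fun m' => (b m' : ℤ) := by
  intro f
  refine ⟨f, ?_⟩
  intro cost'
  have hc : cost' = fun i =>
      if i < k then cost i
      else if i < k + f * (k - j) then cost (j + ((i - k) % (k - j)))
      else cost (i - f * (k - j)) := rfl
  set n := k - j with hndef
  have hn0 : 0 < n := by omega
  set L := ∑ l ∈ Finset.Ico j k, cost l with hLdef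
  set S : ℕ → (Fin r → ℤ) := fun i => ∑ l ∈ Finset.range i, cost l with hSdef
  have hSb : ∀ i, S i ≤ fun m' => (b m' : ℤ) := by
    intro i
    match i with
    | 0 => intro m'; simp [hSdef]
    | (i+1) => exact hpref i
  have hSsucc : ∀ i, S (i+1) = S i + cost i := fun i => Finset.sum_range_succ cost i
  have hSk : S k = S j + L := by
    simp only [hSdef, hLdef]
    exact (Finset.sum_range_add_sum_Ico cost hjk.le).symm
  have hsmul : ∀ q : ℕ, (q • L) ≤ 0 := by
    intro q m'
    have hL' : L m' ≤ 0 := hloop m'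
    simpa [nsmul_eq_mul] using
      mul_nonpos_of_nonneg_of_nonpos (by positivity : (0:ℤ) ≤ (q:ℤ)) hL'
  have hmid : ∀ s, s < f * n → cost' (k + s) = cost (j + s % n) := by
    intro s hs
    rw [hc]
    simp only
    rw [if_neg (by omega), if_pos (by omega)]
    have e : k + s - k = s := by omega
    rw [e]
  have key : ∀ t, t ≤ f * n →
      ∑ l ∈ Finset.range (k + t), cost' l = S (j + t % n) + (t / n + 1) • L := by
    intro t
    induction t with
    | zero =>
      intro _
      have h1 : ∑ l ∈ Finset.range k, cost' l = S k := by
        apply Finset.sum_congr rfl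
        intro l hl
        rw [hc]
        simp [Finset.mem_range.mp hl]
      simp only [Nat.add_zero, Nat.zero_mod, Nat.zero_div, h1, hSk]
      norm_num
    | succ t ih =>
      intro ht
      have ht' : t ≤ f * n := by omega
      have e : k + (t + 1) = (k + t) + 1 := rfl
      rw [e, Finset.sum_range_succ, ih ht', hmid t (by omega)]
      by_cases hcase : t % n + 1 = n
      · have e1 : t + 1 = n * (t / n + 1) := by
          conv_lhs => rw [← Nat.div_add_mod t n]
          rw [Nat.add_assoc, hcase, ← Nat.mul_succ]
        have h1 : (t + 1) % n = 0 := by rw [e1, Nat.mul_mod_right]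
        have h2 : (t + 1) / n = t / n + 1 := by
          rw [e1, Nat.mul_div_cancel_left _ hn0]
        have h3 : j + t % n + 1 = k := by omega
        have h4 : S (j + t % n) + cost (j + t % n) = S k := by
          rw [← h3]; exact (hSsucc _).symm
        rw [h1, h2]
        have h5 : S (j + 0) = S j := by norm_num
        rw [h5, add_right_comm, h4, hSk, succ_nsmul]
        module
      · have hlt : t % n + 1 < n := by
          have := Nat.mod_lt t hn0
          omega
        have e0 : t + 1 = n * (t / n) + (t % n + 1) := by
          rw [← Nat.add_assoc, Nat.div_add_mod]
        have h1 : (t + 1) % n = t % n + 1 := by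
          rw [e0, Nat.mul_add_mod, Nat.mod_eq_of_lt hlt]
        have h2 : (t + 1) / n = t / n := by
          rw [e0, Nat.mul_add_div hn0, Nat.div_eq_of_lt hlt, Nat.add_zero]
        have h3 : j + (t % n + 1) = (j + t % n) + 1 := rfl
        rw [h1, h2, h3, hSsucc]
        abel
  have tail : ∀ u, k + f * n ≤ u →
      ∑ l ∈ Finset.range u, cost' l = S (u - f * n) + f • L := by
    intro u hu
    induction u, hu using Nat.le_induction with
    | base =>
      rw [key (f * n) le_rfl]
      have h1 : (f * n) % n = 0 := Nat.mul_mod_left f n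
      have h2 : (f * n) / n = f := Nat.mul_div_cancel f hn0
      rw [h1, h2, Nat.add_zero, Nat.add_sub_cancel, hSk, succ_nsmul]
      abel
    | succ u hu ih =>
      rw [Finset.sum_range_succ, ih]
      have hcu : cost' u = cost (u - f * n) := by
        rw [hc]
        simp only
        rw [if_neg (by omega), if_neg (by omega)]
      rw [hcu]
      have e : u + 1 - f * n = (u - f * n) + 1 := by omega
      rw [e, hSsucc]
      abel
  constructor
  · have heq := congrFun (tail (k + f * n) le_rfl) m
    rw [Nat.add_sub_cancel] at heq
    rw [Pi.add_apply, Pi.smul_apply, nsmul_eq_mul] at heq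
    rw [heq]
    have hSkm : S k m ≤ (b m : ℤ) := hSb k m
    have hLm : L m ≤ -1 := by omega
    have : (f : ℤ) * L m ≤ (f : ℤ) * (-1) :=
      mul_le_mul_of_nonneg_left hLm (by positivity)
    linarith
  · intro i
    rcases lt_or_ge i k with hik | hik
    · have h1 : ∑ l ∈ Finset.range (i + 1), cost' l = S (i + 1) := by
        apply Finset.sum_congr rfl
        intro l hl
        rw [hc]
        have : l < k := by
          have := Finset.mem_range.mp hl
          omega
        simp [this]
      rw [h1]
      exact hSb (i + 1)
    · rcases le_or_gt (i + 1) (k + f * n) with hik2 | hik2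
      · have e : i + 1 = k + (i + 1 - k) := by omega
        rw [e, key (i + 1 - k) (by omega)]
        intro m'
        have h1 : (((i + 1 - k) / n + 1) • L) m' ≤ 0 := hsmul _ m'
        have h2 : S (j + (i + 1 - k) % n) m' ≤ (b m' : ℤ) := hSb _ m'
        simp only [Pi.add_apply]
        linarith
      · rw [tail (i + 1) (by omega)]
        intro m'
        have h1 : (f • L) m' ≤ 0 := hsmul f m'
        have h2 : S (i + 1 - f * n) m' ≤ (b m' : ℤ) := hSb _ m'
        simp only [Pi.add_apply]
        linarith
end
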